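/- arXiv:2504.02212 — 3 statements merged into one kernel-verified Lean document; each statement's English description precedes it below -/
import Mathlib

section
/- Let ρ be a state (positive semidefinite operator with positive trace) on ℂ^m ⊗ ℂ^n. Then there exists x > 0 such that ρ + x·I is separable, i.e., ρ + x·I can be written as a finite sum of positive multiples of product projectors |a⟩⟨a| ⊗ |b⟩⟨b|. -/
open Matrix
open scoped Kronecker ComplexOrder

namespace Stmt6Aux

/-- The generating set of separable building blocks. -/
def S (m n : ℕ) : Set (Matrix (Fin m × Fin n) (Fin m × Fin n) ℂ) :=
  { M | ∃ (c : ℝ) (a : Fin m → ℂ) (b : Fin n → ℂ), 0 ≤ c ∧ star a ⬝ᵥ a = 1 ∧ star b ⬝ᵥ b = 1 ∧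
      M = (c : ℂ) • (vecMulVec a (star a) ⊗ₖ vecMulVec b (star b)) }

/-- Rank-one spectral decomposition of a PSD matrix. -/
lemma psd_rank_one {d : ℕ} {A : Matrix (Fin d) (Fin d) ℂ} (hA : A.PosSemidef) :
    ∃ (g : Fin d → ℝ) (v : Fin d → Fin d → ℂ), (∀ i, 0 ≤ g i) ∧
      (∀ i, star (v i) ⬝ᵥ v i = 1) ∧
      A = ∑ i, (g i : ℂ) • vecMulVec (v i) (star (v i)) := by
  have hH := hA.1
  set U : Matrix (Fin d) (Fin d) ℂ := (hH.eigenvectorUnitary : Matrix (Fin d) (Fin d) ℂ) with hU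
  have hUU : star U * U = 1 := (Matrix.mem_unitaryGroup_iff').mp hH.eigenvectorUnitary.2
  refine ⟨hH.eigenvalues, fun i p => U p i, fun i => hA.eigenvalues_nonneg i, ?_, ?_⟩
  · intro i
    have h1 : (star U * U) i i = (1 : Matrix (Fin d) (Fin d) ℂ) i i := by rw [hUU]
    simpa [Matrix.mul_apply, Matrix.one_apply, dotProduct] using h1
  · conv_lhs => rw [hH.spectral_theorem, Unitary.conjStarAlgAut_apply]
    ext p q
    simp only [Matrix.mul_apply, Matrix.diagonal_apply, Matrix.sum_apply, Matrix.smul_apply,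
      vecMulVec_apply, Pi.star_apply, star_apply, Function.comp, smul_eq_mul]
    refine Finset.sum_congr rfl fun i _ => ?_
    simp only [mul_ite, mul_zero, Finset.sum_ite_eq', Finset.mem_univ, if_true]
    rw [mul_right_comm, mul_comm]; rfl

end Stmt6Aux

namespace Stmt6Aux
open Matrix
open scoped Kronecker

variable {m n : ℕ}

lemma proj_psd {d : ℕ} (a : Fin d → ℂ) : (vecMulVec a (star a)).PosSemidef := by
  have h : vecMulVec a (star a) = (Matrix.replicateRow Unit (star a))ᴴ * Matrix.replicateRow Unit (star a) := by
    rw [Matrix.conjTranspose_replicateRow, star_star]; exact Matrix.vecMulVec_eq Unit a (star a)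
  rw [h]
  exact Matrix.posSemidef_conjTranspose_mul_self _

lemma one_sub_proj_psd {d : ℕ} {a : Fin d → ℂ} (ha : star a ⬝ᵥ a = 1) :
    (1 - vecMulVec a (star a)).PosSemidef := by
  set P := vecMulVec a (star a) with hP
  have hPH : Pᴴ = P := (proj_psd a).1
  have hP2 : P * P = P := by
    ext p q
    simp only [Matrix.mul_apply, vecMulVec_apply, Pi.star_apply]
    calc ∑ j, a p * star (a j) * (a j * star (a q))
        = (∑ j, star (a j) * a j) * (a p * star (a q)) := by
          rw [Finset.sum_mul]; exact Finset.sum_congr rfl fun j _ => by ring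
      _ = a p * star (a q) := by
          have : (∑ j, star (a j) * a j) = star a ⬝ᵥ a := rfl
          rw [this, ha, one_mul]
  have key : 1 - P = (1 - P)ᴴ * (1 - P) := by
    rw [Matrix.conjTranspose_sub, Matrix.conjTranspose_one, hPH, sub_mul, mul_sub, mul_sub,
      one_mul, mul_one, hP2]
    simp only [one_mul, mul_one]
    abel
  rw [key]
  exact Matrix.posSemidef_conjTranspose_mul_self _

def Sep (m n : ℕ) : AddSubmonoid (Matrix (Fin m × Fin n) (Fin m × Fin n) ℂ) :=
  AddSubmonoid.closure (S m n)

lemma smul_mem_Sep {c : ℝ} (hc : 0 ≤ c) {M} (hM : M ∈ Sep m n) : (c : ℂ) • M ∈ Sep m n := by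
  induction hM using AddSubmonoid.closure_induction with
  | mem x hx =>
    obtain ⟨c', a, b, hc', ha, hb, rfl⟩ := hx
    refine AddSubmonoid.subset_closure ⟨c * c', a, b, mul_nonneg hc hc', ha, hb, ?_⟩
    rw [smul_smul]; push_cast; ring_nf
  | zero => simpa using (Sep m n).zero_mem
  | add x y _ _ hx hy => rw [smul_add]; exact (Sep m n).add_mem hx hy

lemma sum_kronecker {ι : Type*} (s : Finset ι) (f : ι → Matrix (Fin m) (Fin m) ℂ)
    (B : Matrix (Fin n) (Fin n) ℂ) : (∑ i ∈ s, f i) ⊗ₖ B = ∑ i ∈ s, f i ⊗ₖ B := by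
  ext ⟨p, p'⟩ ⟨q, q'⟩
  simp [Matrix.kroneckerMap_apply, Matrix.sum_apply, Finset.sum_mul]

lemma kronecker_sum {ι : Type*} (s : Finset ι) (A : Matrix (Fin m) (Fin m) ℂ)
    (f : ι → Matrix (Fin n) (Fin n) ℂ) : A ⊗ₖ (∑ i ∈ s, f i) = ∑ i ∈ s, A ⊗ₖ f i := by
  ext ⟨p, p'⟩ ⟨q, q'⟩
  simp [Matrix.kroneckerMap_apply, Matrix.sum_apply, Finset.mul_sum]

lemma kron_mem_Sep {A : Matrix (Fin m) (Fin m) ℂ} {B : Matrix (Fin n) (Fin n) ℂ}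
    (hA : A.PosSemidef) (hB : B.PosSemidef) : A ⊗ₖ B ∈ Sep m n := by
  obtain ⟨g, v, hg, hv, rfl⟩ := psd_rank_one hA
  obtain ⟨h, w, hh, hw, rfl⟩ := psd_rank_one hB
  rw [sum_kronecker]
  refine AddSubmonoid.sum_mem _ fun i _ => ?_
  rw [kronecker_sum]
  refine AddSubmonoid.sum_mem _ fun j _ => ?_
  rw [Matrix.smul_kronecker, Matrix.kronecker_smul, smul_smul]
  exact AddSubmonoid.subset_closure
    ⟨g i * h j, v i, w j, mul_nonneg (hg i) (hh j), hv i, hw j, by push_cast; rfl⟩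

lemma one_mem_Sep : (1 : Matrix (Fin m × Fin n) (Fin m × Fin n) ℂ) ∈ Sep m n := by
  rw [← Matrix.one_kronecker_one]
  exact kron_mem_Sep Matrix.PosSemidef.one Matrix.PosSemidef.one

end Stmt6Aux

namespace Stmt6Aux
open Matrix
open scoped Kronecker

/-- Building-block vectors for the rank-one decomposition of `single i j 1`. -/
def W (d : ℕ) : Fin 4 → Fin d → Fin d → (Fin d → ℂ)
  | 0, i, j => Pi.single i 1 + Pi.single j 1
  | 1, i, j => Pi.single i 1 + Pi.single j Complex.I
  | 2, i, _ => Pi.single i 1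
  | 3, _, j => Pi.single j 1

noncomputable def γc : Fin 4 → ℂ
  | 0 => 1 / 2
  | 1 => Complex.I / 2
  | 2 => -(1 + Complex.I) / 2
  | 3 => -(1 + Complex.I) / 2

lemma W_ne_zero {d : ℕ} (t : Fin 4) (i j : Fin d) : W d t i j ≠ 0 := by
  fin_cases t
  · intro h
    have := congrFun h i
    by_cases hij : i = j <;>
      simp [W, Pi.single_apply, hij] at this
  · intro h
    have := congrFun h i
    by_cases hij : i = j <;>
      simp [W, Pi.single_apply, hij, Complex.ext_iff] at this
  · intro h
    have := congrFun h i
    simp [W, Pi.single_apply] at this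
  · intro h
    have := congrFun h j
    simp [W, Pi.single_apply] at this

lemma Edec {d : ℕ} (i j : Fin d) :
    single i j (1 : ℂ) =
      ∑ t : Fin 4, γc t • vecMulVec (W d t i j) (star (W d t i j)) := by
  by_cases hij : i = j
  · subst hij
    ext p q
    rw [Fin.sum_univ_four]
    by_cases hpi : p = i <;> by_cases hqi : q = i <;>
      simp [W, γc, vecMulVec_apply, Matrix.single, Pi.single_apply, hpi, hqi] <;>
      skip
    all_goals (try (first
      | ring1
      | linear_combination (Complex.I/2) * Complex.I_mul_I
      | linear_combination (-Complex.I/2) * Complex.I_mul_I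
      | linear_combination ((1:ℂ)/2) * Complex.I_mul_I
      | linear_combination ((-1:ℂ)/2) * Complex.I_mul_I
      | linear_combination Complex.I * Complex.I_mul_I
      | linear_combination (-Complex.I) * Complex.I_mul_I
      | linear_combination ((1+Complex.I)/2) * Complex.I_mul_I
      | linear_combination ((1-Complex.I)/2) * Complex.I_mul_I
      | linear_combination ((-1+Complex.I)/2) * Complex.I_mul_I
      | linear_combination ((-1-Complex.I)/2) * Complex.I_mul_I))
    all_goals (first
      | (exact fun h => hpi h.symm)
      | (exact fun h => hqi h.symm)
      | (exact fun _ h => hqi h.symm))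
  · ext p q
    rw [Fin.sum_univ_four]
    by_cases hpi : p = i <;> by_cases hpj : p = j <;> by_cases hqi : q = i <;>
      by_cases hqj : q = j
    all_goals (try (exact absurd (hpi.symm.trans hpj) hij))
    all_goals (try (exact absurd (hqi.symm.trans hqj) hij))
    all_goals
      simp [W, γc, vecMulVec_apply, Matrix.single, Pi.single_apply, hpi, hpj, hqi, hqj,
        hij, Ne.symm hij]
    all_goals (try (first
      | ring1
      | linear_combination (Complex.I/2) * Complex.I_mul_I
      | linear_combination (-Complex.I/2) * Complex.I_mul_I
      | linear_combination ((1:ℂ)/2) * Complex.I_mul_I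
      | linear_combination ((-1:ℂ)/2) * Complex.I_mul_I
      | linear_combination Complex.I * Complex.I_mul_I
      | linear_combination (-Complex.I) * Complex.I_mul_I
      | linear_combination ((1+Complex.I)/2) * Complex.I_mul_I
      | linear_combination ((1-Complex.I)/2) * Complex.I_mul_I
      | linear_combination ((-1+Complex.I)/2) * Complex.I_mul_I
      | linear_combination ((-1-Complex.I)/2) * Complex.I_mul_I))
    all_goals (first
      | (exact fun h => hpi h.symm)
      | (exact fun h => hqi h.symm)
      | (exact fun h => hpj h.symm)
      | (exact fun h => hqj h.symm)
      | (exact fun _ h => hqi h.symm)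
      | (exact fun _ h => hqj h.symm))
end Stmt6Aux

namespace Stmt6Aux
open Matrix
open scoped Kronecker

lemma normalize_exists {d : ℕ} {a : Fin d → ℂ} (ha : a ≠ 0) :
    ∃ (t : ℝ) (u : Fin d → ℂ), 0 < t ∧ star u ⬝ᵥ u = 1 ∧
      vecMulVec a (star a) = (t : ℂ) • vecMulVec u (star u) := by
  classical
  set na : ℝ := ∑ i, Complex.normSq (a i) with hna
  have hpos : 0 < na := by
    have hex : ∃ i, a i ≠ 0 := by
      by_contra h; push_neg at h; exact ha (funext h)
    obtain ⟨i, hi⟩ := hex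
    exact Finset.sum_pos' (fun j _ => Complex.normSq_nonneg _)
      ⟨i, Finset.mem_univ i, Complex.normSq_pos.2 hi⟩
  set c : ℝ := (Real.sqrt na)⁻¹ with hc
  have hkey : na * (c * c) = 1 := by
    rw [hc, ← mul_inv, Real.mul_self_sqrt hpos.le, mul_inv_cancel₀ hpos.ne']
  have hkeyC : (na : ℂ) * ((c : ℂ) * (c : ℂ)) = 1 := by
    have := congrArg (fun x : ℝ => (x : ℂ)) hkey
    push_cast at this
    simpa using this
  have hsum : star a ⬝ᵥ a = (na : ℂ) := by
    simp only [dotProduct, Pi.star_apply, hna]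
    push_cast
    refine Finset.sum_congr rfl fun i _ => ?_
    rw [Complex.normSq_eq_conj_mul_self, Complex.star_def]
  refine ⟨na, fun i => (c : ℂ) * a i, hpos, ?_, ?_⟩
  · have hu : (star fun i => (c : ℂ) * a i) ⬝ᵥ (fun i => (c : ℂ) * a i)
        = ((c : ℂ) * c) * (star a ⬝ᵥ a) := by
      simp only [dotProduct, Pi.star_apply, Finset.mul_sum]
      refine Finset.sum_congr rfl fun i _ => ?_
      simp only [Complex.star_def, _root_.map_mul, Complex.conj_ofReal]
      ring
    rw [hu, hsum]
    linear_combination hkeyC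
  · ext p q
    simp only [vecMulVec_apply, Matrix.smul_apply, Pi.star_apply, smul_eq_mul,
      Complex.star_def, _root_.map_mul, Complex.conj_ofReal]
    linear_combination (-(a p * (starRingEnd ℂ) (a q))) * hkeyC

lemma kron_conjTranspose {m n : ℕ} (A : Matrix (Fin m) (Fin m) ℂ) (B : Matrix (Fin n) (Fin n) ℂ) :
    (A ⊗ₖ B)ᴴ = Aᴴ ⊗ₖ Bᴴ := by
  ext ⟨p, p'⟩ ⟨q, q'⟩
  simp [Matrix.conjTranspose_apply, Matrix.kroneckerMap_apply]

lemma term_mem {m n : ℕ} (r : ℝ) {a : Fin m → ℂ} {b : Fin n → ℂ} (ha : a ≠ 0) (hb : b ≠ 0) :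
    ∃ y : ℝ, 0 ≤ y ∧
      (r : ℂ) • (vecMulVec a (star a) ⊗ₖ vecMulVec b (star b)) + (y : ℂ) • 1 ∈ Sep m n := by
  obtain ⟨t, u, ht, hu, hMa⟩ := normalize_exists ha
  obtain ⟨s', w, hs', hw, hMb⟩ := normalize_exists hb
  refine ⟨|r * (t * s')|, abs_nonneg _, ?_⟩
  rw [hMa, hMb, Matrix.smul_kronecker, Matrix.kronecker_smul, smul_smul, smul_smul]
  have hcast : (r : ℂ) * (t : ℂ) * (s' : ℂ) = ((r * (t * s') : ℝ) : ℂ) := by push_cast; ring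
  rw [hcast]
  set z : ℝ := r * (t * s') with hz
  set M := vecMulVec u (star u) ⊗ₖ vecMulVec w (star w) with hM
  rcases le_or_gt 0 z with hzpos | hzneg
  · refine (Sep m n).add_mem ?_ (smul_mem_Sep (abs_nonneg _) one_mem_Sep)
    exact AddSubmonoid.subset_closure ⟨z, u, w, hzpos, hu, hw, rfl⟩
  · have habs : |z| = -z := abs_of_neg hzneg
    have hrw : (z : ℂ) • M + ((|z| : ℝ) : ℂ) • (1 : Matrix (Fin m × Fin n) (Fin m × Fin n) ℂ)
        = ((|z| : ℝ) : ℂ) • ((1 : Matrix (Fin m × Fin n) (Fin m × Fin n) ℂ) - M) := by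
      rw [habs]; push_cast; module
    rw [hrw]
    refine smul_mem_Sep (abs_nonneg _) ?_
    have hdec : (1 : Matrix (Fin m × Fin n) (Fin m × Fin n) ℂ) - M =
        (1 - vecMulVec u (star u)) ⊗ₖ vecMulVec w (star w)
          + (1 : Matrix (Fin m) (Fin m) ℂ) ⊗ₖ (1 - vecMulVec w (star w)) := by
      ext ⟨p, p'⟩ ⟨q, q'⟩
      simp only [hM, Matrix.sub_apply, Matrix.add_apply, Matrix.kroneckerMap_apply,
        Matrix.one_apply, Prod.mk.injEq, vecMulVec_apply, Pi.star_apply]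
      by_cases h1 : p = q <;> by_cases h2 : p' = q' <;> simp [h1, h2] <;> ring
    rw [hdec]
    exact (Sep m n).add_mem (kron_mem_Sep (one_sub_proj_psd hu) (proj_psd w))
      (kron_mem_Sep Matrix.PosSemidef.one (one_sub_proj_psd hw))

lemma stdBasis_kron {m n : ℕ} (i j : Fin m) (k l : Fin n) :
    single ((i, k) : Fin m × Fin n) ((j, l) : Fin m × Fin n) (1 : ℂ)
      = single i j 1 ⊗ₖ single k l 1 := by
  ext ⟨p, p'⟩ ⟨q, q'⟩
  simp only [Matrix.single, Matrix.of_apply, Matrix.kroneckerMap_apply, Prod.mk.injEq]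
  by_cases h1 : i = p <;> by_cases h2 : j = q <;> by_cases h3 : k = p' <;> by_cases h4 : l = q' <;>
    simp [h1, h2, h3, h4]

end Stmt6Aux

namespace Stmt6Aux
open Matrix
open scoped Kronecker

variable {m n : ℕ}

abbrev Idx (m n : ℕ) := ((Fin m × Fin n) × (Fin m × Fin n)) × Fin 4 × Fin 4

noncomputable def cf (ρ : Matrix (Fin m × Fin n) (Fin m × Fin n) ℂ) (q : Idx m n) : ℂ :=
  ρ q.1.1 q.1.2 * γc q.2.1 * γc q.2.2

def avv (m n : ℕ) (q : Idx m n) : Fin m → ℂ := W m q.2.1 q.1.1.1 q.1.2.1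

def bvv (m n : ℕ) (q : Idx m n) : Fin n → ℂ := W n q.2.2 q.1.1.2 q.1.2.2

noncomputable def Mq (m n : ℕ) (q : Idx m n) : Matrix (Fin m × Fin n) (Fin m × Fin n) ℂ :=
  vecMulVec (avv m n q) (star (avv m n q)) ⊗ₖ vecMulVec (bvv m n q) (star (bvv m n q))

lemma avv_ne_zero (q : Idx m n) : avv m n q ≠ 0 := W_ne_zero _ _ _

lemma bvv_ne_zero (q : Idx m n) : bvv m n q ≠ 0 := W_ne_zero _ _ _

lemma stdBasis_smul {α β : Type*} [DecidableEq α] [DecidableEq β] [Fintype α] [Fintype β]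
    (i : α) (j : β) (c : ℂ) :
    single i j c = c • single i j (1 : ℂ) := by
  ext p q
  simp only [Matrix.single, Matrix.of_apply, Matrix.smul_apply, smul_eq_mul,
    mul_ite, mul_one, mul_zero]

lemma rho_dec (ρ : Matrix (Fin m × Fin n) (Fin m × Fin n) ℂ) :
    ρ = ∑ q : Idx m n, cf ρ q • Mq m n q := by
  conv_lhs => rw [matrix_eq_sum_single ρ]
  conv_rhs => rw [Fintype.sum_prod_type, Fintype.sum_prod_type]
  refine Finset.sum_congr rfl fun s _ => Finset.sum_congr rfl fun t' _ => ?_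
  obtain ⟨i, k⟩ := s
  obtain ⟨j, l⟩ := t'
  rw [stdBasis_smul, stdBasis_kron, Edec i j, Edec k l, sum_kronecker, Fintype.sum_prod_type,
    Finset.smul_sum]
  refine Finset.sum_congr rfl fun t _ => ?_
  rw [Matrix.smul_kronecker, kronecker_sum, Finset.smul_sum, Finset.smul_sum]
  refine Finset.sum_congr rfl fun s _ => ?_
  rw [Matrix.kronecker_smul, smul_smul, smul_smul]
  simp only [cf, Mq, avv, bvv]

lemma rho_dec_re {ρ : Matrix (Fin m × Fin n) (Fin m × Fin n) ℂ} (hH : ρ.IsHermitian) :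
    ρ = ∑ q : Idx m n, (((cf ρ q).re : ℝ) : ℂ) • Mq m n q := by
  have h1 := rho_dec ρ
  have hMH : ∀ q : Idx m n, (Mq m n q)ᴴ = Mq m n q := fun q => by
    rw [Mq, kron_conjTranspose, (proj_psd _).1, (proj_psd _).1]
  have h2 : ρ = ∑ q : Idx m n, (starRingEnd ℂ) (cf ρ q) • Mq m n q := by
    conv_lhs => rw [← hH, h1]
    rw [Matrix.conjTranspose_sum]
    refine Finset.sum_congr rfl fun q _ => ?_
    rw [Matrix.conjTranspose_smul, hMH]
    rfl
  have h3 : (2 : ℂ) • ρ = ∑ q : Idx m n, ((2 * (cf ρ q).re : ℝ) : ℂ) • Mq m n q := by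
    calc (2 : ℂ) • ρ
        = (∑ q : Idx m n, cf ρ q • Mq m n q)
            + ∑ q : Idx m n, (starRingEnd ℂ) (cf ρ q) • Mq m n q := by
          rw [← h1, ← h2, two_smul]
      _ = ∑ q : Idx m n, (cf ρ q + (starRingEnd ℂ) (cf ρ q)) • Mq m n q := by
          rw [← Finset.sum_add_distrib]
          exact Finset.sum_congr rfl fun q _ => (add_smul _ _ _).symm
      _ = ∑ q : Idx m n, ((2 * (cf ρ q).re : ℝ) : ℂ) • Mq m n q := by
          refine Finset.sum_congr rfl fun q _ => ?_
          congr 1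
          first
            | (rw [Complex.add_conj]; push_cast; ring)
            | rw [Complex.add_conj]
  calc ρ = (2 : ℂ)⁻¹ • ((2 : ℂ) • ρ) := by rw [smul_smul]; norm_num
    _ = (2 : ℂ)⁻¹ • ∑ q : Idx m n, ((2 * (cf ρ q).re : ℝ) : ℂ) • Mq m n q := by rw [h3]
    _ = ∑ q : Idx m n, (((cf ρ q).re : ℝ) : ℂ) • Mq m n q := by
        rw [Finset.smul_sum]
        refine Finset.sum_congr rfl fun q _ => ?_
        rw [smul_smul]
        congr 1
        push_cast
        ring

end Stmt6Aux

open Stmt6Aux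

/-- Adding enough white noise to any bipartite state makes it separable:
there is `x > 0` such that `ρ + x·I` is a finite sum of nonnegative multiples
of product projectors `|a⟩⟨a| ⊗ |b⟩⟨b|` with unit vectors `a`, `b`. -/
theorem stmt6 {m n : ℕ} (ρ : Matrix (Fin m × Fin n) (Fin m × Fin n) ℂ)
    (hρ : ρ.PosSemidef) (htr : 0 < ρ.trace.re) :
    ∃ x : ℝ, 0 < x ∧
      ∃ (K : ℕ) (p : Fin K → ℝ) (a : Fin K → (Fin m → ℂ)) (b : Fin K → (Fin n → ℂ)),
        (∀ k, 0 ≤ p k) ∧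
        (∀ k, star (a k) ⬝ᵥ a k = 1) ∧ (∀ k, star (b k) ⬝ᵥ b k = 1) ∧
        ρ + (x : ℂ) • 1 =
          ∑ k, (p k : ℂ) •
            (Matrix.vecMulVec (a k) (star (a k)) ⊗ₖ Matrix.vecMulVec (b k) (star (b k))) := by
  classical
  have h4 := rho_dec_re hρ.1
  choose y hy0 hy using fun q : Idx m n =>
    term_mem (m := m) (n := n) ((cf ρ q).re) (avv_ne_zero q) (bvv_ne_zero q)
  set x : ℝ := (∑ q : Idx m n, y q) + 1 with hxdef
  have hx : 0 < x := by
    have : 0 ≤ ∑ q : Idx m n, y q := Finset.sum_nonneg fun q _ => hy0 q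
    linarith
  have hmem : ρ + (x : ℂ) • 1 ∈ Sep m n := by
    have hxc : (x : ℂ) = (∑ q : Idx m n, (y q : ℂ)) + 1 := by
      rw [hxdef]; push_cast; ring
    have hsplit : ρ + (x : ℂ) • 1 =
        (∑ q : Idx m n, ((((cf ρ q).re : ℝ) : ℂ) • Mq m n q + (y q : ℂ) • 1)) + 1 := by
      rw [Finset.sum_add_distrib, ← h4, hxc, add_smul, one_smul, ← Finset.sum_smul,
        Finset.sum_smul, add_assoc]
    rw [hsplit]
    refine (Sep m n).add_mem (AddSubmonoid.sum_mem _ fun q _ => ?_) one_mem_Sep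
    have := hy q
    simpa [Mq] using this
  obtain ⟨l, hl, hsum⟩ := AddSubmonoid.exists_list_of_mem_closure hmem
  have hget : ∀ k : Fin l.length, l.get k ∈ S m n := fun k => hl _ (l.get_mem _)
  choose p pa pb hp hpa hpb hrep using hget
  refine ⟨x, hx, l.length, p, pa, pb, hp, hpa, hpb, ?_⟩
  calc ρ + (x : ℂ) • 1 = l.sum := hsum.symm
    _ = ∑ k : Fin l.length, l.get k := by rw [← List.sum_ofFn, List.ofFn_get]
    _ = _ := Finset.sum_congr rfl fun k _ => hrep k
end

section
/- On ℂ⁴ ⊗ ℂ⁴ define P₁ = Q₁ = |0⟩⟨0| ⊗ diag(1,1,0,0), P₂ = Q₂ = |1⟩⟨1| ⊗ diag(1,0,1,0), P₃ = |2⟩⟨2| ⊗ diag(1,0,0,1), Q₃ = |2⟩⟨2| ⊗ diag(0,1,1,0). Then (P₁,P₂) ∼ₛ (Q₁,Q₂), (P₁,P₃) ∼ₛ (Q₁,Q₃), and (P₂,P₃) ∼ₛ (Q₂,Q₃), but the triple (P₁,P₂,P₃) is NOT simultaneously LU equivalent to (Q₁,Q₂,Q₃). -/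
open Matrix
open scoped Kronecker

/-- Simultaneous LU equivalence of pairs of operators on `ℂ⁴ ⊗ ℂ⁴`. -/
def SLU2 (A₁ A₂ B₁ B₂ : Matrix (Fin 4 × Fin 4) (Fin 4 × Fin 4) ℂ) : Prop :=
  ∃ U ∈ Matrix.unitaryGroup (Fin 4) ℂ, ∃ V ∈ Matrix.unitaryGroup (Fin 4) ℂ,
    (U ⊗ₖ V) * B₁ * (U ⊗ₖ V)ᴴ = A₁ ∧ (U ⊗ₖ V) * B₂ * (U ⊗ₖ V)ᴴ = A₂

/-- Simultaneous LU equivalence of triples of operators on `ℂ⁴ ⊗ ℂ⁴`. -/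
def SLU3 (A₁ A₂ A₃ B₁ B₂ B₃ : Matrix (Fin 4 × Fin 4) (Fin 4 × Fin 4) ℂ) : Prop :=
  ∃ U ∈ Matrix.unitaryGroup (Fin 4) ℂ, ∃ V ∈ Matrix.unitaryGroup (Fin 4) ℂ,
    (U ⊗ₖ V) * B₁ * (U ⊗ₖ V)ᴴ = A₁ ∧ (U ⊗ₖ V) * B₂ * (U ⊗ₖ V)ᴴ = A₂ ∧
      (U ⊗ₖ V) * B₃ * (U ⊗ₖ V)ᴴ = A₃

def Pone : Matrix (Fin 4 × Fin 4) (Fin 4 × Fin 4) ℂ :=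
  Matrix.diagonal ![(1:ℂ),0,0,0] ⊗ₖ Matrix.diagonal ![(1:ℂ),1,0,0]

def Ptwo : Matrix (Fin 4 × Fin 4) (Fin 4 × Fin 4) ℂ :=
  Matrix.diagonal ![(0:ℂ),1,0,0] ⊗ₖ Matrix.diagonal ![(1:ℂ),0,1,0]

def Pthree : Matrix (Fin 4 × Fin 4) (Fin 4 × Fin 4) ℂ :=
  Matrix.diagonal ![(0:ℂ),0,1,0] ⊗ₖ Matrix.diagonal ![(1:ℂ),0,0,1]

def Qthree : Matrix (Fin 4 × Fin 4) (Fin 4 × Fin 4) ℂ :=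
  Matrix.diagonal ![(0:ℂ),0,1,0] ⊗ₖ Matrix.diagonal ![(0:ℂ),1,1,0]

/-- Conjugate transpose distributes over the Kronecker product. -/
lemma kron_conjT (A B : Matrix (Fin 4) (Fin 4) ℂ) : (A ⊗ₖ B)ᴴ = Aᴴ ⊗ₖ Bᴴ := by
  ext ⟨i,j⟩ ⟨k,l⟩
  simp [conjTranspose_apply, kroneckerMap_apply, mul_comm]

/-- Conjugation by `1 ⊗ₖ V` acts only on the second factor. -/
lemma conj_kron (V A B : Matrix (Fin 4) (Fin 4) ℂ) :
    ((1 : Matrix (Fin 4) (Fin 4) ℂ) ⊗ₖ V) * (A ⊗ₖ B) *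
      ((1 : Matrix (Fin 4) (Fin 4) ℂ) ⊗ₖ V)ᴴ = A ⊗ₖ (V * B * Vᴴ) := by
  rw [kron_conjT, ← Matrix.mul_kronecker_mul, ← Matrix.mul_kronecker_mul,
    Matrix.one_mul, Matrix.conjTranspose_one, Matrix.mul_one]

def V2 : Matrix (Fin 4) (Fin 4) ℂ := !![0,1,0,0;1,0,0,0;0,0,0,1;0,0,1,0]

def V3 : Matrix (Fin 4) (Fin 4) ℂ := !![0,0,1,0;0,0,0,1;1,0,0,0;0,1,0,0]

lemma hV2 : V2 ∈ Matrix.unitaryGroup (Fin 4) ℂ := by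
  rw [Matrix.mem_unitaryGroup_iff]
  ext i j
  fin_cases i <;> fin_cases j <;>
    simp [V2, Matrix.mul_apply, Fin.sum_univ_four, Matrix.one_apply]

lemma hV3 : V3 ∈ Matrix.unitaryGroup (Fin 4) ℂ := by
  rw [Matrix.mem_unitaryGroup_iff]
  ext i j
  fin_cases i <;> fin_cases j <;>
    simp [V3, Matrix.mul_apply, Fin.sum_univ_four, Matrix.one_apply]

lemma hV2a : V2 * Matrix.diagonal ![(1:ℂ),1,0,0] * V2ᴴ = Matrix.diagonal ![(1:ℂ),1,0,0] := by
  ext i j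
  fin_cases i <;> fin_cases j <;>
    simp [V2, Matrix.mul_apply, Fin.sum_univ_four, Matrix.diagonal_apply,
      Matrix.vecMul_diagonal]

lemma hV2b : V2 * Matrix.diagonal ![(0:ℂ),1,1,0] * V2ᴴ = Matrix.diagonal ![(1:ℂ),0,0,1] := by
  ext i j
  fin_cases i <;> fin_cases j <;>
    simp [V2, Matrix.mul_apply, Fin.sum_univ_four, Matrix.diagonal_apply,
      Matrix.vecMul_diagonal]

lemma hV3a : V3 * Matrix.diagonal ![(1:ℂ),0,1,0] * V3ᴴ = Matrix.diagonal ![(1:ℂ),0,1,0] := by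
  ext i j
  fin_cases i <;> fin_cases j <;>
    simp [V3, Matrix.mul_apply, Fin.sum_univ_four, Matrix.diagonal_apply,
      Matrix.vecMul_diagonal]

lemma hV3b : V3 * Matrix.diagonal ![(0:ℂ),1,1,0] * V3ᴴ = Matrix.diagonal ![(1:ℂ),0,0,1] := by
  ext i j
  fin_cases i <;> fin_cases j <;>
    simp [V3, Matrix.mul_apply, Fin.sum_univ_four, Matrix.diagonal_apply,
      Matrix.vecMul_diagonal]

/-- Partial trace over the first tensor factor. -/
noncomputable def tr1 (X : Matrix (Fin 4 × Fin 4) (Fin 4 × Fin 4) ℂ) : Matrix (Fin 4) (Fin 4) ℂ :=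
  Matrix.of fun j k => ∑ i, X (i, j) (i, k)

lemma tr1_kron (A B : Matrix (Fin 4) (Fin 4) ℂ) : tr1 (A ⊗ₖ B) = A.trace • B := by
  ext j k
  simp [tr1, Matrix.trace, Matrix.diag, kroneckerMap_apply, Finset.sum_mul]

/-- Key reduction: the partial trace of a `U ⊗ V`-conjugation of a Kronecker
product only depends on `V` and the traces of the first factors. -/
lemma key (U V A B C D : Matrix (Fin 4) (Fin 4) ℂ) (hU : U ∈ Matrix.unitaryGroup (Fin 4) ℂ)
    (h : (U ⊗ₖ V) * (A ⊗ₖ B) * (U ⊗ₖ V)ᴴ = C ⊗ₖ D) :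
    A.trace • (V * B * Vᴴ) = C.trace • D := by
  have h1 : (U ⊗ₖ V) * (A ⊗ₖ B) * (U ⊗ₖ V)ᴴ = (U * A * Uᴴ) ⊗ₖ (V * B * Vᴴ) := by
    rw [kron_conjT, ← Matrix.mul_kronecker_mul, ← Matrix.mul_kronecker_mul]
  rw [h1] at h
  have h2 := congrArg tr1 h
  rw [tr1_kron, tr1_kron] at h2
  have htr : (U * A * Uᴴ).trace = A.trace := by
    rw [Matrix.trace_mul_cycle,
      show Uᴴ * U = 1 from Matrix.mem_unitaryGroup_iff'.mp hU, Matrix.one_mul]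
  rwa [htr] at h2

/-- The partial SLU equivalences hold for each pair, but the two triples
`(P₁,P₂,P₃)` and `(Q₁,Q₂,Q₃)` (with `Q₁ = P₁`, `Q₂ = P₂`) are not
simultaneously LU equivalent. -/
theorem stmt13 :
    SLU2 Pone Ptwo Pone Ptwo ∧ SLU2 Pone Pthree Pone Qthree ∧
    SLU2 Ptwo Pthree Ptwo Qthree ∧
    ¬ SLU3 Pone Ptwo Pthree Pone Ptwo Qthree := by
  have hone : (1 : Matrix (Fin 4) (Fin 4) ℂ) ∈ Matrix.unitaryGroup (Fin 4) ℂ := by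
    rw [Matrix.mem_unitaryGroup_iff]; simp
  refine ⟨?_, ?_, ?_, ?_⟩
  · exact ⟨1, hone, 1, hone, by simp [Matrix.one_kronecker_one], by
      simp [Matrix.one_kronecker_one]⟩
  · refine ⟨1, hone, V2, hV2, ?_, ?_⟩
    · rw [Pone, conj_kron, hV2a]
    · rw [Qthree, Pthree, conj_kron, hV2b]
  · refine ⟨1, hone, V3, hV3, ?_, ?_⟩
    · rw [Ptwo, conj_kron, hV3a]
    · rw [Qthree, Pthree, conj_kron, hV3b]
  · rintro ⟨U, hU, V, hV, h1, h2, h3⟩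
    rw [Pone] at h1
    rw [Ptwo] at h2
    rw [Qthree, Pthree] at h3
    have e1 := key U V _ _ _ _ hU h1
    have e2 := key U V _ _ _ _ hU h2
    have e3 := key U V _ _ _ _ hU h3
    have t1 : (Matrix.diagonal ![(1:ℂ),0,0,0]).trace = 1 := by
      simp [Matrix.trace_diagonal, Fin.sum_univ_four]
    have t2 : (Matrix.diagonal ![(0:ℂ),1,0,0]).trace = 1 := by
      simp [Matrix.trace_diagonal, Fin.sum_univ_four]
    have t3 : (Matrix.diagonal ![(0:ℂ),0,1,0]).trace = 1 := by
      simp [Matrix.trace_diagonal, Fin.sum_univ_four]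
    rw [t1, one_smul, one_smul] at e1
    rw [t2, one_smul, one_smul] at e2
    rw [t3, one_smul, one_smul] at e3
    -- from e1, e2 : V commutes with the two diagonal matrices
    have hVV : Vᴴ * V = 1 := Matrix.mem_unitaryGroup_iff'.mp hV
    have comm1 : V * Matrix.diagonal ![(1:ℂ),1,0,0] = Matrix.diagonal ![(1:ℂ),1,0,0] * V := by
      calc V * Matrix.diagonal ![(1:ℂ),1,0,0]
          = V * Matrix.diagonal ![(1:ℂ),1,0,0] * (Vᴴ * V) := by rw [hVV, Matrix.mul_one]
        _ = (V * Matrix.diagonal ![(1:ℂ),1,0,0] * Vᴴ) * V := by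
            rw [Matrix.mul_assoc (V * Matrix.diagonal ![(1:ℂ),1,0,0])]
        _ = Matrix.diagonal ![(1:ℂ),1,0,0] * V := by rw [e1]
    have comm2 : V * Matrix.diagonal ![(1:ℂ),0,1,0] = Matrix.diagonal ![(1:ℂ),0,1,0] * V := by
      calc V * Matrix.diagonal ![(1:ℂ),0,1,0]
          = V * Matrix.diagonal ![(1:ℂ),0,1,0] * (Vᴴ * V) := by rw [hVV, Matrix.mul_one]
        _ = (V * Matrix.diagonal ![(1:ℂ),0,1,0] * Vᴴ) * V := by
            rw [Matrix.mul_assoc (V * Matrix.diagonal ![(1:ℂ),0,1,0])]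
        _ = Matrix.diagonal ![(1:ℂ),0,1,0] * V := by rw [e2]
    have h02 : V 0 2 = 0 := by
      have := Matrix.ext_iff.2 comm1 0 2
      simpa [Matrix.mul_diagonal, Matrix.diagonal_mul] using this.symm
    have h01 : V 0 1 = 0 := by
      have := Matrix.ext_iff.2 comm2 0 1
      simpa [Matrix.mul_diagonal, Matrix.diagonal_mul] using this.symm
    have := Matrix.ext_iff.2 e3 0 0
    simp [Matrix.mul_apply, Matrix.conjTranspose_apply, Fin.sum_univ_four,
      Matrix.diagonal_apply, Matrix.mul_diagonal, h01, h02] at this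
end

section
/- Let ρ be a normalized state (positive semidefinite, trace 1) on ℂ^m ⊗ ℂ^n. Then the maximal eigenvalue of its partial transpose ρ^Γ is at most 1, with equality if and only if ρ is a pure product state, ρ = |a⟩⟨a| ⊗ |b⟩⟨b| for unit vectors a ∈ ℂ^m, b ∈ ℂ^n. -/
open Matrix
open scoped ComplexOrder

/-- Partial transpose on the second tensor factor. -/
def ptranspose {m n : ℕ} (M : Matrix (Fin m × Fin n) (Fin m × Fin n) ℂ) :
    Matrix (Fin m × Fin n) (Fin m × Fin n) ℂ :=
  Matrix.of fun p q => M (p.1, q.2) (q.1, p.2)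

/-- A product vector in `ℂ^m ⊗ ℂ^n`. -/
def prodVec {m n : ℕ} (a : Fin m → ℂ) (b : Fin n → ℂ) : Fin m × Fin n → ℂ :=
  fun p => a p.1 * b p.2

open scoped ComplexConjugate

section Aux

lemma cs_ineq {ι : Type*} [Fintype ι] (f g : ι → ℂ) :
    ‖∑ i, f i * g i‖ ^ 2 ≤ (∑ i, ‖f i‖ ^ 2) * (∑ i, ‖g i‖ ^ 2) := by
  have h := norm_inner_le_norm (𝕜 := ℂ) (E := EuclideanSpace ℂ ι)
      (WithLp.toLp 2 (fun i => conj (f i)) : EuclideanSpace ℂ ι) (WithLp.toLp 2 g : EuclideanSpace ℂ ι)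
  rw [EuclideanSpace.norm_eq, EuclideanSpace.norm_eq] at h
  simp only [PiLp.inner_apply, RCLike.inner_apply, starRingEnd_apply, star_star] at h
  have h2 : ‖∑ i, f i * g i‖ ≤
      Real.sqrt (∑ i, ‖f i‖ ^ 2) * Real.sqrt (∑ i, ‖g i‖ ^ 2) := by
    simpa [norm_star, mul_comm] using h
  calc ‖∑ i, f i * g i‖ ^ 2
      ≤ (Real.sqrt (∑ i, ‖f i‖ ^ 2) * Real.sqrt (∑ i, ‖g i‖ ^ 2)) ^ 2 := by
        apply pow_le_pow_left₀ (norm_nonneg _) h2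
    _ = (∑ i, ‖f i‖ ^ 2) * (∑ i, ‖g i‖ ^ 2) := by
        rw [mul_pow, Real.sq_sqrt, Real.sq_sqrt] <;> positivity


lemma cs_eq_aux {ι : Type*} [Fintype ι] (x y : EuclideanSpace ℂ ι) (hx : x ≠ 0) (hy : y ≠ 0)
    (h : ‖∑ i, star (x i) * y i‖ ^ 2 = (∑ i, ‖x i‖ ^ 2) * (∑ i, ‖y i‖ ^ 2)) :
    ∃ r : ℂ, ∀ i, y i = r * x i := by
  have key : ‖(inner ℂ x y)‖ = ‖x‖ * ‖y‖ := by
    have h1 : ‖(inner ℂ x y)‖ ^ 2 = (‖x‖ * ‖y‖) ^ 2 := by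
      rw [mul_pow, PiLp.norm_sq_eq_of_L2, PiLp.norm_sq_eq_of_L2]
      have e0 : (inner ℂ x y) = ∑ i, star (x i) * y i := by
        simp only [PiLp.inner_apply, RCLike.inner_apply, starRingEnd_apply]
        exact Finset.sum_congr rfl fun i _ => mul_comm _ _
      rw [e0, h]
    nlinarith [norm_nonneg (inner ℂ x y), norm_nonneg x, norm_nonneg y,
      mul_nonneg (norm_nonneg x) (norm_nonneg y)]
  obtain ⟨r, hr, hrel⟩ := norm_inner_eq_norm_iff hx hy |>.mp key
  exact ⟨r, fun i => by simpa [mul_comm] using congrFun (congrArg (fun z : EuclideanSpace ℂ ι => (z.ofLp : ι → ℂ)) hrel) i⟩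

lemma cs_eq {ι : Type*} [Fintype ι] (f g : ι → ℂ) (hf : f ≠ 0)
    (h : ‖∑ i, f i * g i‖ ^ 2 = (∑ i, ‖f i‖ ^ 2) * (∑ i, ‖g i‖ ^ 2)) :
    ∃ c : ℂ, ∀ i, g i = c * conj (f i) := by
  by_cases hg : g = 0
  · exact ⟨0, fun i => by simp [hg, Pi.zero_apply]⟩
  let x : EuclideanSpace ℂ ι := (WithLp.equiv 2 (ι → ℂ)).symm (fun i => conj (f i))
  let y : EuclideanSpace ℂ ι := (WithLp.equiv 2 (ι → ℂ)).symm g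
  have hxapp : ∀ i, x i = conj (f i) := fun i => rfl
  have hyapp : ∀ i, y i = g i := fun i => rfl
  have hx : x ≠ 0 := by
    intro h0
    apply hf; funext i
    have : x i = 0 := by rw [h0]; rfl
    rw [hxapp i] at this
    simpa using this
  have hy : y ≠ 0 := by
    intro h0
    apply hg; funext i
    have : y i = 0 := by rw [h0]; rfl
    rwa [hyapp i] at this
  have hres := cs_eq_aux x y hx hy (by
    have e1 : (∑ i, star (x i) * y i) = ∑ i, f i * g i := by
      apply Finset.sum_congr rfl
      intro i _
      rw [hxapp i, hyapp i, starRingEnd_apply, star_star, mul_comm]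
    have e2 : (∑ i, ‖x i‖ ^ 2) = ∑ i, ‖f i‖ ^ 2 := by
      apply Finset.sum_congr rfl
      intro i _
      rw [hxapp i, RCLike.norm_conj]
    have e3 : (∑ i, ‖y i‖ ^ 2) = ∑ i, ‖g i‖ ^ 2 := by
      apply Finset.sum_congr rfl
      intro i _
      rw [hyapp i]
    rw [e1, e2, e3]; exact h)
  obtain ⟨r, hrel⟩ := hres
  refine ⟨r, fun i => ?_⟩
  have := hrel i
  rw [hxapp i, hyapp i] at this
  exact this


lemma spectral_decomp {N : Type*} [Fintype N] [DecidableEq N] (ρ : Matrix N N ℂ)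
    (hρ : ρ.PosSemidef) (htr : ρ.trace = 1) :
    ∃ (p : N → ℝ) (ψ : N → N → ℂ),
      (∀ s, 0 ≤ p s) ∧ (∑ s, p s) = 1 ∧
      (∀ s, (∑ i, ‖ψ s i‖ ^ 2) = 1) ∧
      (∀ s t, s ≠ t → (∑ i, conj (ψ s i) * ψ t i) = 0) ∧
      (∀ i j, ρ i j = ∑ s, (p s : ℂ) * (ψ s i * conj (ψ s j))) := by
  have hH : ρ.IsHermitian := hρ.1
  set U : Matrix N N ℂ := (hH.eigenvectorUnitary : Matrix N N ℂ) with hU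
  refine ⟨hH.eigenvalues, fun s i => U i s, fun s => hρ.eigenvalues_nonneg s, ?_, ?_, ?_, ?_⟩
  · -- trace
    have hst : star U * U = 1 := by
      exact Matrix.mem_unitaryGroup_iff'.mp (hH.eigenvectorUnitary).2
    have h1 : ρ.trace = (Matrix.diagonal (RCLike.ofReal ∘ hH.eigenvalues) : Matrix N N ℂ).trace := by
      conv_lhs => rw [hH.spectral_theorem]
      rw [Unitary.conjStarAlgAut_apply]
      rw [Matrix.trace_mul_cycle, hst, Matrix.one_mul]
    rw [htr] at h1
    have h2 : (Matrix.diagonal (RCLike.ofReal ∘ hH.eigenvalues) : Matrix N N ℂ).trace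
        = ((∑ s, hH.eigenvalues s : ℝ) : ℂ) := by
      rw [Matrix.trace_diagonal]
      push_cast
      rfl
    rw [h2] at h1
    exact_mod_cast h1.symm
  · -- column norms
    intro s
    have hst : star U * U = 1 := Matrix.mem_unitaryGroup_iff'.mp (hH.eigenvectorUnitary).2
    have h1 : (star U * U) s s = 1 := by rw [hst]; simp
    rw [Matrix.mul_apply] at h1
    have h2 : ∀ i, (star U) s i * U i s = ((‖U i s‖ ^ 2 : ℝ) : ℂ) := by
      intro i
      rw [Matrix.star_apply, RCLike.star_def, mul_comm, Complex.mul_conj, Complex.normSq_eq_norm_sq]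
    rw [Finset.sum_congr rfl (fun i _ => h2 i)] at h1
    exact_mod_cast h1
  · -- orthogonality
    intro s t hstne
    have hst : star U * U = 1 := Matrix.mem_unitaryGroup_iff'.mp (hH.eigenvectorUnitary).2
    have h1 : (star U * U) s t = 0 := by rw [hst]; simp [Matrix.one_apply, hstne]
    rw [Matrix.mul_apply] at h1
    simpa [Matrix.star_apply, RCLike.star_def] using h1
  · -- entrywise
    intro i j
    conv_lhs => rw [hH.spectral_theorem]
    rw [Unitary.conjStarAlgAut_apply]
    rw [Matrix.mul_apply]
    apply Finset.sum_congr rfl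
    intro s _
    rw [Matrix.mul_diagonal, Matrix.star_apply, RCLike.star_def]
    show U i s * (RCLike.ofReal ∘ hH.eigenvalues) s * conj (U j s) = _
    simp only [Function.comp_apply, RCLike.ofReal, Complex.coe_algebraMap]
    ring


lemma norm_sub_sq_complex (z w : ℂ) :
    ‖z - w‖ ^ 2 = ‖z‖ ^ 2 + ‖w‖ ^ 2 - 2 * (z * conj w).re := by
  simp only [Complex.sq_norm, Complex.normSq_apply, Complex.mul_re, Complex.conj_re, Complex.conj_im,
    Complex.sub_re, Complex.sub_im]
  ring

lemma re_mul_conj_le (z w : ℂ) : (z * conj w).re ≤ (‖z‖ ^ 2 + ‖w‖ ^ 2) / 2 := by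
  nlinarith [norm_sub_sq_complex z w, sq_nonneg ‖z - w‖, norm_nonneg (z - w)]

lemma re_mul_conj_eq (z w : ℂ) (h : (z * conj w).re = (‖z‖ ^ 2 + ‖w‖ ^ 2) / 2) : z = w := by
  have h2 : ‖z - w‖ ^ 2 = 0 := by rw [norm_sub_sq_complex]; linarith
  have := pow_eq_zero_iff (n := 2) (by norm_num) |>.mp h2
  rwa [norm_eq_zero, sub_eq_zero] at this

lemma dot_star_self {ι : Type*} [Fintype ι] (x : ι → ℂ) :
    star x ⬝ᵥ x = ((∑ i, ‖x i‖ ^ 2 : ℝ) : ℂ) := by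
  rw [dotProduct, Complex.ofReal_sum]
  apply Finset.sum_congr rfl
  intro i _
  rw [Pi.star_apply, RCLike.star_def, mul_comm, Complex.mul_conj, Complex.normSq_eq_norm_sq]

lemma sum_sq_pos {ι : Type*} [Fintype ι] (x : ι → ℂ) (hx : x ≠ 0) :
    0 < ∑ i, ‖x i‖ ^ 2 := by
  obtain ⟨i, hi⟩ := Function.ne_iff.mp hx
  have : (0:ℝ) < ‖x i‖ ^ 2 := by
    have := norm_pos_iff.mpr hi
    positivity
  exact Finset.sum_pos' (fun j _ => by positivity) ⟨i, Finset.mem_univ i, this⟩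

noncomputable def Qform {m n : ℕ} (ψ v : Fin m × Fin n → ℂ) : ℂ :=
  ∑ i, ∑ k, (∑ l, ψ (i,l) * v (k,l)) * conj (∑ j, ψ (k,j) * v (i,j))

noncomputable def SBform {m n : ℕ} (ψ v : Fin m × Fin n → ℂ) : ℝ :=
  ∑ i, ∑ k, ‖∑ l, ψ (i,l) * v (k,l)‖ ^ 2

lemma Qform_re_le_SB {m n : ℕ} (ψ v : Fin m × Fin n → ℂ) :
    (Qform ψ v).re ≤ SBform ψ v := by
  rw [Qform, SBform, Complex.re_sum]
  have step1 : ∀ i : Fin m, (∑ k, (∑ l, ψ (i,l) * v (k,l)) * conj (∑ j, ψ (k,j) * v (i,j))).re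
      = ∑ k, ((∑ l, ψ (i,l) * v (k,l)) * conj (∑ j, ψ (k,j) * v (i,j))).re :=
    fun i => Complex.re_sum _ _
  simp only [step1]
  have hsw : ∑ i : Fin m, ∑ k : Fin m, ‖∑ j, ψ (k,j) * v (i,j)‖ ^ 2
      = ∑ i : Fin m, ∑ k : Fin m, ‖∑ j, ψ (i,j) * v (k,j)‖ ^ 2 := Finset.sum_comm
  have key : ∀ (i k : Fin m),
      2 * ((∑ l, ψ (i,l) * v (k,l)) * conj (∑ j, ψ (k,j) * v (i,j))).re
      ≤ ‖∑ l, ψ (i,l) * v (k,l)‖ ^ 2 + ‖∑ j, ψ (k,j) * v (i,j)‖ ^ 2 := by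
    intro i k
    have := re_mul_conj_le (∑ l, ψ (i,l) * v (k,l)) (∑ j, ψ (k,j) * v (i,j))
    linarith
  have h2 : 2 * (∑ i : Fin m, ∑ k, ((∑ l, ψ (i,l) * v (k,l)) * conj (∑ j, ψ (k,j) * v (i,j))).re)
      ≤ (∑ i : Fin m, ∑ k, ‖∑ l, ψ (i,l) * v (k,l)‖ ^ 2)
        + (∑ i : Fin m, ∑ k, ‖∑ j, ψ (k,j) * v (i,j)‖ ^ 2) := by
    rw [← Finset.sum_add_distrib, Finset.mul_sum]
    apply Finset.sum_le_sum; intro i _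
    rw [← Finset.sum_add_distrib, Finset.mul_sum]
    apply Finset.sum_le_sum; intro k _
    exact key i k
  linarith

lemma SB_le {m n : ℕ} (ψ v : Fin m × Fin n → ℂ) :
    SBform ψ v ≤ (∑ q, ‖ψ q‖ ^ 2) * (∑ q, ‖v q‖ ^ 2) := by
  calc SBform ψ v ≤ ∑ i, ∑ k, (∑ l, ‖ψ (i,l)‖ ^ 2) * (∑ l, ‖v (k,l)‖ ^ 2) := by
        rw [SBform]
        apply Finset.sum_le_sum; intro i _
        apply Finset.sum_le_sum; intro k _
        simpa using cs_ineq (fun l => ψ (i,l)) (fun l => v (k,l))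
    _ = (∑ i, ∑ l, ‖ψ (i,l)‖ ^ 2) * (∑ k, ∑ l, ‖v (k,l)‖ ^ 2) := by
        rw [Finset.sum_mul_sum]
    _ = (∑ q, ‖ψ q‖ ^ 2) * (∑ q, ‖v q‖ ^ 2) := by
        rw [Fintype.sum_prod_type (f := fun q : Fin m × Fin n => ‖ψ q‖ ^ 2),
          Fintype.sum_prod_type (f := fun q : Fin m × Fin n => ‖v q‖ ^ 2)]

lemma cs_ineq_dummy : True := trivial


lemma pt_expand {m n : ℕ} (M : Matrix (Fin m × Fin n) (Fin m × Fin n) ℂ)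
    (v : Fin m × Fin n → ℂ) : star v ⬝ᵥ (ptranspose M *ᵥ v)
      = ∑ p', ∑ q, conj (v p') * (M (p'.1, q.2) (q.1, p'.2) * v q) := by
  rw [dotProduct]
  apply Finset.sum_congr rfl; intro p' _
  rw [mulVec, dotProduct, Finset.mul_sum]
  apply Finset.sum_congr rfl; intro q _
  simp only [ptranspose, Matrix.of_apply, Pi.star_apply, RCLike.star_def]

lemma pt_linear {m n : ℕ} (ρ : Matrix (Fin m × Fin n) (Fin m × Fin n) ℂ)
    (p : Fin m × Fin n → ℝ) (ψ : Fin m × Fin n → Fin m × Fin n → ℂ)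
    (hent : ∀ i j, ρ i j = ∑ s, (p s : ℂ) * (ψ s i * conj (ψ s j)))
    (v : Fin m × Fin n → ℂ) :
    star v ⬝ᵥ (ptranspose ρ *ᵥ v)
      = ∑ s, (p s : ℂ) * (star v ⬝ᵥ (ptranspose (vecMulVec (ψ s) (star (ψ s))) *ᵥ v)) := by
  have rhs : ∀ s, star v ⬝ᵥ (ptranspose (vecMulVec (ψ s) (star (ψ s))) *ᵥ v)
      = ∑ p', ∑ q, conj (v p') * (ψ s (p'.1,q.2) * conj (ψ s (q.1,p'.2)) * v q) := by
    intro s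
    rw [pt_expand]
    apply Finset.sum_congr rfl; intro p' _
    apply Finset.sum_congr rfl; intro q _
    simp only [vecMulVec, Matrix.of_apply, Pi.star_apply, RCLike.star_def]
  set F : (Fin m × Fin n) → (Fin m × Fin n) → (Fin m × Fin n) → ℂ :=
    fun s p' q => (p s : ℂ) * (conj (v p') * (ψ s (p'.1,q.2) * conj (ψ s (q.1,p'.2)) * v q))
    with hF
  have lhs : ∀ p' q : Fin m × Fin n, conj (v p') * (ρ (p'.1, q.2) (q.1, p'.2) * v q)
      = ∑ s, F s p' q := by
    intro p' q
    rw [hent, Finset.sum_mul, Finset.mul_sum]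
    apply Finset.sum_congr rfl; intro s _
    rw [hF]; ring
  calc star v ⬝ᵥ (ptranspose ρ *ᵥ v)
      = ∑ p', ∑ q, conj (v p') * (ρ (p'.1, q.2) (q.1, p'.2) * v q) := pt_expand ρ v
    _ = ∑ p', ∑ q, ∑ s, F s p' q := by
        apply Finset.sum_congr rfl; intro p' _
        apply Finset.sum_congr rfl; intro q _
        exact lhs p' q
    _ = ∑ p', ∑ s, ∑ q, F s p' q := by
        apply Finset.sum_congr rfl; intro p' _
        exact Finset.sum_comm
    _ = ∑ s, ∑ p', ∑ q, F s p' q := Finset.sum_comm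
    _ = ∑ s, (p s : ℂ) * (star v ⬝ᵥ (ptranspose (vecMulVec (ψ s) (star (ψ s))) *ᵥ v)) := by
        apply Finset.sum_congr rfl; intro s _
        rw [rhs s, Finset.mul_sum]
        apply Finset.sum_congr rfl; intro p' _
        rw [Finset.mul_sum]


lemma ptq {m n : ℕ} (ψ v : Fin m × Fin n → ℂ) :
    star v ⬝ᵥ (ptranspose (vecMulVec ψ (star ψ)) *ᵥ v) = Qform ψ v := by
  rw [Qform]
  have L : star v ⬝ᵥ (ptranspose (vecMulVec ψ (star ψ)) *ᵥ v)
      = ∑ i, ∑ j, ∑ k, ∑ l,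
          conj (v (i,j)) * (ψ (i,l) * conj (ψ (k,j)) * v (k,l)) := by
    rw [dotProduct, Fintype.sum_prod_type]
    apply Finset.sum_congr rfl; intro i _
    apply Finset.sum_congr rfl; intro j _
    rw [mulVec, dotProduct, Fintype.sum_prod_type, Finset.mul_sum]
    apply Finset.sum_congr rfl; intro k _
    rw [Finset.mul_sum]
    apply Finset.sum_congr rfl; intro l _
    simp only [ptranspose, vecMulVec, Matrix.of_apply, Pi.star_apply, RCLike.star_def]
    try ring
  have R : ∀ i k : Fin m, (∑ l, ψ (i,l) * v (k,l)) * conj (∑ j, ψ (k,j) * v (i,j))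
      = ∑ j, ∑ l, conj (v (i,j)) * (ψ (i,l) * conj (ψ (k,j)) * v (k,l)) := by
    intro i k
    rw [map_sum, Finset.sum_mul_sum]
    rw [Finset.sum_comm]
    apply Finset.sum_congr rfl; intro j _
    apply Finset.sum_congr rfl; intro l _
    rw [(starRingEnd ℂ).map_mul]
    ring
  rw [L]
  apply Finset.sum_congr rfl; intro i _
  rw [Finset.sum_comm]
  apply Finset.sum_congr rfl; intro k _
  rw [R]

lemma conj_mul_self (z : ℂ) : conj z * z = ((‖z‖ ^ 2 : ℝ) : ℂ) := by
  rw [mul_comm, Complex.mul_conj, ← Complex.sq_norm]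

lemma re_mul_conj_self (z : ℂ) : (z * conj z).re = ‖z‖ ^ 2 := by
  rw [Complex.mul_conj, Complex.ofReal_re, ← Complex.sq_norm]

lemma sum2_eq_of_le {α β : Type*} [Fintype α] [Fintype β] (f g : α → β → ℝ)
    (hle : ∀ i k, f i k ≤ g i k) (heq : ∑ i, ∑ k, f i k = ∑ i, ∑ k, g i k) :
    ∀ i k, f i k = g i k := by
  have houter : ∀ i, (∑ k, f i k) = ∑ k, g i k := by
    have h1 : ∀ i ∈ (Finset.univ : Finset α), (∑ k, f i k) ≤ ∑ k, g i k :=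
      fun i _ => Finset.sum_le_sum (fun k _ => hle i k)
    intro i
    exact (Finset.sum_eq_sum_iff_of_le h1).mp heq i (Finset.mem_univ i)
  intro i k
  exact (Finset.sum_eq_sum_iff_of_le (fun k _ => hle i k)).mp (houter i) k (Finset.mem_univ k)

end Aux

/-- Every eigenvalue of the partial transpose of a normalized state is `≤ 1`,
and `1` is attained iff the state is a pure product state
`|a⟩⟨a| ⊗ |b⟩⟨b|` with unit vectors `a`, `b`. -/
theorem stmt18 {m n : ℕ} (ρ : Matrix (Fin m × Fin n) (Fin m × Fin n) ℂ)
    (hρ : ρ.PosSemidef) (htr : ρ.trace = 1) :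
    (∀ μ : ℝ, (∃ v : Fin m × Fin n → ℂ, v ≠ 0 ∧ ptranspose ρ *ᵥ v = (μ : ℂ) • v) →
      μ ≤ 1) ∧
    ((∃ v : Fin m × Fin n → ℂ, v ≠ 0 ∧ ptranspose ρ *ᵥ v = ((1 : ℝ) : ℂ) • v) ↔
      ∃ (a : Fin m → ℂ) (b : Fin n → ℂ),
        star a ⬝ᵥ a = 1 ∧ star b ⬝ᵥ b = 1 ∧
        ρ = Matrix.vecMulVec (prodVec a b) (star (prodVec a b))) := by
  obtain ⟨p, ψ, hp0, hp1, hψn, hψo, hent⟩ := spectral_decomp ρ hρ htr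
  have hmain : ∀ v : Fin m × Fin n → ℂ,
      star v ⬝ᵥ (ptranspose ρ *ᵥ v) = ∑ s, (p s : ℂ) * Qform (ψ s) v := by
    intro v
    rw [pt_linear ρ p ψ hent v]
    apply Finset.sum_congr rfl; intro s _
    rw [ptq]
  have hQre : ∀ (s : Fin m × Fin n) (v : Fin m × Fin n → ℂ),
      (Qform (ψ s) v).re ≤ ∑ q, ‖v q‖ ^ 2 := by
    intro s v
    calc (Qform (ψ s) v).re ≤ SBform (ψ s) v := Qform_re_le_SB _ _
      _ ≤ (∑ q, ‖ψ s q‖ ^ 2) * (∑ q, ‖v q‖ ^ 2) := SB_le _ _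
      _ = ∑ q, ‖v q‖ ^ 2 := by rw [hψn s, one_mul]
  have hre : ∀ v : Fin m × Fin n → ℂ,
      (star v ⬝ᵥ (ptranspose ρ *ᵥ v)).re = ∑ s, p s * (Qform (ψ s) v).re := by
    intro v
    rw [hmain v, Complex.re_sum]
    apply Finset.sum_congr rfl; intro s _
    simp [Complex.mul_re]
  have hbound : ∀ v : Fin m × Fin n → ℂ,
      (star v ⬝ᵥ (ptranspose ρ *ᵥ v)).re ≤ ∑ q, ‖v q‖ ^ 2 := by
    intro v
    rw [hre v]
    calc ∑ s, p s * (Qform (ψ s) v).re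
        ≤ ∑ s, p s * (∑ q, ‖v q‖ ^ 2) := by
          apply Finset.sum_le_sum; intro s _
          exact mul_le_mul_of_nonneg_left (hQre s v) (hp0 s)
      _ = ∑ q, ‖v q‖ ^ 2 := by rw [← Finset.sum_mul, hp1, one_mul]
  constructor
  · rintro μ ⟨v, hv0, hveq⟩
    have hN := sum_sq_pos v hv0
    have heq : star v ⬝ᵥ (ptranspose ρ *ᵥ v) = (μ : ℂ) * ((∑ q, ‖v q‖ ^ 2 : ℝ) : ℂ) := by
      rw [hveq, dotProduct_smul, smul_eq_mul, dot_star_self]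
    have h2 := hbound v
    rw [heq] at h2
    have h3 : μ * (∑ q, ‖v q‖ ^ 2) ≤ ∑ q, ‖v q‖ ^ 2 := by
      have : ((μ : ℂ) * ((∑ q, ‖v q‖ ^ 2 : ℝ) : ℂ)).re = μ * (∑ q, ‖v q‖ ^ 2) := by
        norm_cast
      linarith [this ▸ h2]
    nlinarith
  constructor
  · -- forward (hard) direction
    rintro ⟨v, hv0, hveq⟩
    have hN : (0:ℝ) < ∑ q, ‖v q‖ ^ 2 := sum_sq_pos v hv0
    have hdotN : star v ⬝ᵥ (ptranspose ρ *ᵥ v) = ((∑ q, ‖v q‖ ^ 2 : ℝ) : ℂ) := by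
      rw [hveq, dotProduct_smul, smul_eq_mul, dot_star_self]
      simp
    have hsum : ∑ s, p s * (Qform (ψ s) v).re = ∑ q, ‖v q‖ ^ 2 := by
      have h := hre v
      rw [hdotN, Complex.ofReal_re] at h
      exact h.symm
    -- each s with p s ≠ 0 attains the maximum
    have hterm0 : ∀ s ∈ (Finset.univ : Finset (Fin m × Fin n)),
        p s * ((∑ q, ‖v q‖ ^ 2) - (Qform (ψ s) v).re) = 0 := by
      apply (Finset.sum_eq_zero_iff_of_nonneg ?_).mp
      · have hexp : ∑ s, p s * ((∑ q, ‖v q‖ ^ 2) - (Qform (ψ s) v).re)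
            = (∑ s, p s) * (∑ q, ‖v q‖ ^ 2) - ∑ s, p s * (Qform (ψ s) v).re := by
          rw [Finset.sum_mul, ← Finset.sum_sub_distrib]
          apply Finset.sum_congr rfl; intro s _
          ring
        rw [hexp, hp1, one_mul, hsum, sub_self]
      · intro s _
        exact mul_nonneg (hp0 s) (by linarith [hQre s v])
    have hkey : ∀ s, p s ≠ 0 → (Qform (ψ s) v).re = ∑ q, ‖v q‖ ^ 2 := by
      intro s hs
      have h := hterm0 s (Finset.mem_univ s)
      rcases mul_eq_zero.mp h with h1 | h1
      · exact absurd h1 hs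
      · linarith
    have hSB : ∀ s, p s ≠ 0 → SBform (ψ s) v = ∑ q, ‖v q‖ ^ 2 := by
      intro s hs
      have h1 : SBform (ψ s) v ≤ ∑ q, ‖v q‖ ^ 2 := by
        have := SB_le (ψ s) v
        rw [hψn s, one_mul] at this
        exact this
      have h2 := Qform_re_le_SB (ψ s) v
      have h3 := hkey s hs
      linarith
    -- termwise Cauchy-Schwarz equality
    have hCSeq : ∀ s, p s ≠ 0 → ∀ i k, ‖∑ l, ψ s (i,l) * v (k,l)‖ ^ 2
        = (∑ l, ‖ψ s (i,l)‖ ^ 2) * (∑ l, ‖v (k,l)‖ ^ 2) := by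
      intro s hs
      apply sum2_eq_of_le
      · intro i k
        simpa using cs_ineq (fun l => ψ s (i,l)) (fun l => v (k,l))
      · have h1 : SBform (ψ s) v = ∑ i, ∑ k, ‖∑ l, ψ s (i,l) * v (k,l)‖ ^ 2 := rfl
        have h2 : ∑ i, ∑ k, (∑ l, ‖ψ s (i,l)‖ ^ 2) * (∑ l, ‖v (k,l)‖ ^ 2)
            = (∑ q, ‖ψ s q‖ ^ 2) * (∑ q, ‖v q‖ ^ 2) := by
          rw [← Finset.sum_mul_sum,
            Fintype.sum_prod_type (f := fun q : Fin m × Fin n => ‖ψ s q‖ ^ 2),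
            Fintype.sum_prod_type (f := fun q : Fin m × Fin n => ‖v q‖ ^ 2)]
        rw [← h1, h2, hψn s, one_mul]
        exact hSB s hs
    -- there exists s with p s ≠ 0
    obtain ⟨s₀, hs₀⟩ : ∃ s, p s ≠ 0 := by
      by_contra h
      push_neg at h
      rw [Finset.sum_congr rfl (fun s _ => h s), Finset.sum_const, smul_zero] at hp1
      norm_num at hp1
    -- v is a product vector
    have hψ00 : ψ s₀ ≠ 0 := by
      intro h
      have := hψn s₀
      rw [h] at this
      simp at this
    obtain ⟨⟨i₀, l₀⟩, hi₀⟩ := Function.ne_iff.mp hψ00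
    have hrow : (fun l => ψ s₀ (i₀, l)) ≠ 0 := by
      intro h
      exact hi₀ (by have := congrFun h l₀; simpa using this)
    have hvrow : ∀ k, ∃ c, ∀ l, v (k, l) = c * conj (ψ s₀ (i₀, l)) := by
      intro k
      apply cs_eq _ _ hrow
      simpa using hCSeq s₀ hs₀ i₀ k
    choose d hd using hvrow
    have hvprod : ∀ k l, v (k, l) = d k * conj (ψ s₀ (i₀, l)) := hd
    set e : Fin n → ℂ := fun l => conj (ψ s₀ (i₀, l)) with he
    obtain ⟨⟨k₁, l₁⟩, hv₁⟩ := Function.ne_iff.mp hv0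
    have hv₁' : d k₁ * e l₁ ≠ 0 := by
      rw [he]
      rw [hvprod k₁ l₁] at hv₁
      exact hv₁
    have hdk : d k₁ ≠ 0 := fun h => hv₁' (by rw [h, zero_mul])
    have hel : e l₁ ≠ 0 := fun h => hv₁' (by rw [h, mul_zero])
    -- per-s product structure
    have hψs : ∀ s, p s ≠ 0 → ∃ c : ℂ, ∀ q : Fin m × Fin n,
        ψ s q = c * (d q.1 * conj (e q.2)) := by
      intro s hs
      set w : Fin m × Fin n → ℂ := fun q => conj (d q.1) * e q.2 with hw
      have hQT : Qform (ψ s) v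
          = (∑ q, w q * ψ s q) * conj (∑ q, w q * ψ s q) := by
        rw [Qform]
        have hB : ∀ i k : Fin m, (∑ l, ψ s (i,l) * v (k,l))
            = d k * (∑ l, ψ s (i,l) * e l) := by
          intro i k
          rw [Finset.mul_sum]
          apply Finset.sum_congr rfl; intro l _
          rw [hvprod k l, he]
          ring
        have hT : (∑ q, w q * ψ s q)
            = ∑ i, conj (d i) * (∑ l, ψ s (i,l) * e l) := by
          rw [Fintype.sum_prod_type]
          apply Finset.sum_congr rfl; intro i _
          rw [Finset.mul_sum]
          apply Finset.sum_congr rfl; intro l _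
          rw [hw]
          ring
        calc ∑ i, ∑ k, (∑ l, ψ s (i,l) * v (k,l)) * conj (∑ j, ψ s (k,j) * v (i,j))
            = ∑ i, ∑ k, (conj (d i) * (∑ l, ψ s (i,l) * e l))
                * conj (conj (d k) * (∑ l, ψ s (k,l) * e l)) := by
              apply Finset.sum_congr rfl; intro i _
              apply Finset.sum_congr rfl; intro k _
              rw [hB i k, hB k i]
              simp only [_root_.map_mul, Complex.conj_conj]
              ring
          _ = (∑ i, conj (d i) * (∑ l, ψ s (i,l) * e l))
                * conj (∑ k, conj (d k) * (∑ l, ψ s (k,l) * e l)) := by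
              rw [map_sum, Finset.sum_mul_sum]
          _ = (∑ q, w q * ψ s q) * conj (∑ q, w q * ψ s q) := by rw [hT]
      have hTval : ‖∑ q, w q * ψ s q‖ ^ 2 = ∑ q, ‖v q‖ ^ 2 := by
        have h1 := hkey s hs
        rw [hQT, re_mul_conj_self] at h1
        exact h1
      have hwnorm : (∑ q, ‖w q‖ ^ 2) = ∑ q, ‖v q‖ ^ 2 := by
        apply Finset.sum_congr rfl
        rintro ⟨k, l⟩ _
        have h1 : w (k, l) = conj (d k) * e l := rfl
        rw [h1, hvprod k l]
        simp only [he]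
        simp [norm_mul, RCLike.norm_conj]
      have hweq : ‖∑ q, w q * ψ s q‖ ^ 2 = (∑ q, ‖w q‖ ^ 2) * (∑ q, ‖ψ s q‖ ^ 2) := by
        rw [hψn s, mul_one, hwnorm, hTval]
      have hw0 : w ≠ 0 := by
        intro h
        have h2 := congrFun h (k₁, l₁)
        have h3 : conj (d k₁) * e l₁ = 0 := h2
        rcases mul_eq_zero.mp h3 with h4 | h4
        · exact hdk (by simpa using h4)
        · exact hel h4
      obtain ⟨c, hc⟩ := cs_eq w (ψ s) hw0 hweq
      refine ⟨c, fun q => ?_⟩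
      rw [hc q]
      have : conj (w q) = d q.1 * conj (e q.2) := by
        rw [hw]
        simp only [_root_.map_mul, Complex.conj_conj]
      rw [this]
    -- uniqueness of the nonzero eigenvalue index
    have hw0sum : (0:ℝ) < ∑ q : Fin m × Fin n, ‖d q.1 * conj (e q.2)‖ ^ 2 := by
      apply sum_sq_pos
      intro h
      have h2 := congrFun h (k₁, l₁)
      have h3 : d k₁ * conj (e l₁) = 0 := h2
      rcases mul_eq_zero.mp h3 with h4 | h4
      · exact hdk h4
      · exact hel (by simpa using h4)
    have hcnz : ∀ s (hs : p s ≠ 0) (c : ℂ),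
        (∀ q : Fin m × Fin n, ψ s q = c * (d q.1 * conj (e q.2))) → c ≠ 0 := by
      intro s hs c hc h0
      have := hψn s
      rw [Finset.sum_congr rfl (fun q _ => by rw [hc q, h0, zero_mul, norm_zero])] at this
      simp at this
    have huniq : ∀ s t, p s ≠ 0 → p t ≠ 0 → s = t := by
      intro s t hs ht
      by_contra hst
      obtain ⟨cs, hcs⟩ := hψs s hs
      obtain ⟨ct, hct⟩ := hψs t ht
      have horto := hψo s t hst
      have hcomp : ∑ q : Fin m × Fin n, conj (ψ s q) * ψ t q
          = conj cs * ct * ((∑ q : Fin m × Fin n, ‖d q.1 * conj (e q.2)‖ ^ 2 : ℝ) : ℂ) := by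
        rw [Complex.ofReal_sum, Finset.mul_sum]
        apply Finset.sum_congr rfl; intro q _
        rw [hcs q, hct q, _root_.map_mul, ← conj_mul_self (d q.1 * conj (e q.2))]
        ring
      rw [hcomp] at horto
      have hne : ((∑ q : Fin m × Fin n, ‖d q.1 * conj (e q.2)‖ ^ 2 : ℝ) : ℂ) ≠ 0 := by
        exact_mod_cast ne_of_gt hw0sum
      rcases mul_eq_zero.mp horto with h1 | h1
      · rcases mul_eq_zero.mp h1 with h2 | h2
        · exact hcnz s hs cs hcs (by simpa using h2)
        · exact hcnz t ht ct hct h2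
      · exact hne h1
    have hps0 : p s₀ = 1 := by
      rw [← hp1, eq_comm, Finset.sum_eq_single s₀]
      · intro t _ hts
        by_contra hpt
        exact hts (huniq t s₀ hpt hs₀)
      · intro h; exact absurd (Finset.mem_univ s₀) h
    have hρ_entry : ∀ q q' : Fin m × Fin n, ρ q q' = ψ s₀ q * conj (ψ s₀ q') := by
      intro q q'
      rw [hent q q', Finset.sum_eq_single s₀]
      · rw [hps0]; simp
      · intro t _ hts
        have hpt : p t = 0 := by
          by_contra hpt
          exact hts (huniq t s₀ hpt hs₀)
        rw [hpt]; simp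
      · intro h; exact absurd (Finset.mem_univ s₀) h
    obtain ⟨c, hc⟩ := hψs s₀ hs₀
    -- normalize
    set araw : Fin m → ℂ := fun i => c * d i with haraw
    set braw : Fin n → ℂ := fun l => conj (e l) with hbraw
    have hψq : ∀ q : Fin m × Fin n, ψ s₀ q = araw q.1 * braw q.2 := by
      intro q
      rw [hc q, haraw, hbraw]
      ring
    have hnorm1 : (∑ i, ‖araw i‖ ^ 2) * (∑ l, ‖braw l‖ ^ 2) = 1 := by
      rw [← hψn s₀, Finset.sum_mul_sum,
        Fintype.sum_prod_type (f := fun q : Fin m × Fin n => ‖ψ s₀ q‖ ^ 2)]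
      apply Finset.sum_congr rfl; intro i _
      apply Finset.sum_congr rfl; intro l _
      rw [hψq (i, l)]
      simp [norm_mul, mul_pow]
    have hanorm_pos : 0 < ∑ i, ‖araw i‖ ^ 2 := by
      rcases (Finset.sum_nonneg (fun i (_ : i ∈ Finset.univ) =>
        (by positivity : (0:ℝ) ≤ ‖araw i‖ ^ 2))).lt_or_eq with h | h
      · exact h
      · exfalso; rw [← h, zero_mul] at hnorm1; norm_num at hnorm1
    set r : ℝ := Real.sqrt (∑ i, ‖araw i‖ ^ 2) with hrdef
    have hrpos : 0 < r := Real.sqrt_pos.mpr hanorm_pos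
    have hr2 : r ^ 2 = ∑ i, ‖araw i‖ ^ 2 := Real.sq_sqrt hanorm_pos.le
    refine ⟨fun i => ((r : ℂ))⁻¹ * araw i, fun l => (r : ℂ) * braw l, ?_, ?_, ?_⟩
    · rw [dot_star_self]
      have : (∑ i, ‖((r : ℂ))⁻¹ * araw i‖ ^ 2) = 1 := by
        have heach : ∀ i, ‖((r : ℂ))⁻¹ * araw i‖ ^ 2 = r⁻¹ ^ 2 * ‖araw i‖ ^ 2 := by
          intro i
          rw [norm_mul, mul_pow, norm_inv, Complex.norm_real, Real.norm_of_nonneg hrpos.le]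
        rw [Finset.sum_congr rfl (fun i _ => heach i), ← Finset.mul_sum, ← hr2]
        field_simp
      rw [this]
      norm_num
    · rw [dot_star_self]
      have : (∑ l, ‖(r : ℂ) * braw l‖ ^ 2) = 1 := by
        have heach : ∀ l, ‖(r : ℂ) * braw l‖ ^ 2 = r ^ 2 * ‖braw l‖ ^ 2 := by
          intro l
          rw [norm_mul, mul_pow, Complex.norm_real, Real.norm_of_nonneg hrpos.le]
        rw [Finset.sum_congr rfl (fun l _ => heach l), ← Finset.mul_sum, hr2, hnorm1]
      rw [this]
      norm_num
    · have hprod : ∀ q : Fin m × Fin n,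
          prodVec (fun i => ((r : ℂ))⁻¹ * araw i) (fun l => (r : ℂ) * braw l) q = ψ s₀ q := by
        intro q
        rw [prodVec, hψq q]
        have hrne : (r : ℂ) ≠ 0 := by
          exact_mod_cast ne_of_gt hrpos
        field_simp
      ext q q'
      rw [hρ_entry q q', vecMulVec_apply, hprod q, Pi.star_apply, hprod q']
      rfl
  · -- reverse direction
    rintro ⟨a, b, ha, hb, hab⟩
    refine ⟨prodVec a (star b), ?_, ?_⟩
    · -- nonzero
      intro h0
      have ha' : a ≠ 0 := by
        intro h; rw [h] at ha; simp [dotProduct] at ha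
      have hb' : b ≠ 0 := by
        intro h; rw [h] at hb; simp [dotProduct] at hb
      obtain ⟨i, hi⟩ := Function.ne_iff.mp ha'
      obtain ⟨j, hj⟩ := Function.ne_iff.mp hb'
      have := congrFun h0 (i, j)
      simp only [prodVec, Pi.star_apply, Pi.zero_apply] at this
      exact (mul_ne_zero hi (by simpa using star_ne_zero.mpr hj)) this
    · -- eigen equation
      have hpt : ptranspose ρ = vecMulVec (prodVec a (star b)) (star (prodVec a (star b))) := by
        ext ⟨i, j⟩ ⟨k, l⟩
        show ρ (i, l) (k, j) = _
        rw [hab]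
        simp only [vecMulVec_apply, Pi.star_apply, prodVec, star_mul', star_star]
        ring
      rw [hpt]
      have hunit : star (prodVec a (star b)) ⬝ᵥ (prodVec a (star b)) = 1 := by
        have expand : star (prodVec a (star b)) ⬝ᵥ (prodVec a (star b))
            = (∑ i, star a i * a i) * (∑ j, star b j * b j) := by
          rw [dotProduct, Fintype.sum_prod_type, Finset.sum_mul_sum]
          apply Finset.sum_congr rfl; intro i _
          apply Finset.sum_congr rfl; intro j _
          simp only [Pi.star_apply, prodVec, star_mul', star_star]
          ring
        rw [expand]
        have ha2 : (∑ i, star a i * a i) = 1 := ha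
        have hb2 : (∑ j, star b j * b j) = 1 := hb
        rw [ha2, hb2, one_mul]
      funext q
      rw [mulVec, dotProduct]
      have : ∀ q' : Fin m × Fin n,
          vecMulVec (prodVec a (star b)) (star (prodVec a (star b))) q q' * prodVec a (star b) q'
          = prodVec a (star b) q * (star (prodVec a (star b)) q' * prodVec a (star b) q') := by
        intro q'
        rw [vecMulVec_apply, Pi.star_apply]
        ring
      rw [Finset.sum_congr rfl (fun q' _ => this q'), ← Finset.mul_sum]
      have : (∑ q' : Fin m × Fin n, star (prodVec a (star b)) q' * prodVec a (star b) q') = 1 :=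
        hunit
      rw [this, mul_one]
      simp
end
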